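/- For every u in the Nehari manifold M_{λ,k}, the derivative of the fibering map E_{λ,k}(u) = J'_{λ,k}(u)u satisfies E'_{λ,k}(u)u ≤ −(q_- − p_+) ρ_1(u), where ρ_1(u) = ∫ ( |∇u|^{p(x)} + |u|^{p(x)} ) dx; in particular E'_{λ,k}(u)u < 0 on M_{λ,k}. -/

import Mathlib

/-!
On the Nehari manifold `J'(u)u = 0` says `ρ₁(u) = λ ∫ g_k |u|^q + ∫ f_k |u|^r`. On the diagonal
`E'(u)u` weighs the three integrands of `J'(u)u` by `p`, `q`, `r`; bounding `p ≤ p₊` and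
`q, r ≥ q₋` gives `E'(u)u ≤ p₊ ρ₁(u) - q₋ ρ₁(u)`, and `ρ₁(u) > 0` because `u ≠ 0`.
-/

open MeasureTheory Filter Topology

noncomputable section

/-- Euclidean space `ℝ^N`. -/
abbrev RN (N : ℕ) : Type := EuclideanSpace ℝ (Fin N)

/-- The point of `ℝ^N` with integer coordinates `z`. -/
def intPt {N : ℕ} (z : Fin N → ℤ) : RN N :=
  (EuclideanSpace.equiv (Fin N) ℝ).symm fun i => (z i : ℝ)

/-- `ℤ^N`-periodicity of a function on `ℝ^N`. -/
def ZPeriodic {N : ℕ} (h : RN N → ℝ) : Prop :=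
  ∀ (x : RN N) (z : Fin N → ℤ), h (x + intPt z) = h x

/-- The modular `ρ₁` of the variable exponent Sobolev space `W^{1,p(x)}(ℝ^N)`. -/
def rho1 {N : ℕ} (p : RN N → ℝ) (u : RN N → ℝ) : ℝ :=
  ∫ x, (‖gradient u x‖ ^ p x + |u x| ^ p x)

/-- Membership in the variable exponent Sobolev space `W^{1,p(x)}(ℝ^N)`. -/
def memW {N : ℕ} (p : RN N → ℝ) (u : RN N → ℝ) : Prop :=
  Measurable u ∧ Integrable (fun x => ‖gradient u x‖ ^ p x + |u x| ^ p x) (volume : Measure (RN N))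

/-- The Luxemburg-type norm of `W^{1,p(x)}(ℝ^N)`. -/
def WluxNorm {N : ℕ} (p : RN N → ℝ) (u : RN N → ℝ) : ℝ :=
  sInf {t : ℝ | 0 < t ∧ (∫ x, ((‖gradient u x‖ ^ p x + |u x| ^ p x) / t ^ p x)) ≤ 1}

/-- The energy functional `J_{λ,k}` associated with problem `(P_{λ,k})`. -/
def Jlk {N : ℕ} (p q r f g : RN N → ℝ) (lam : ℝ) (k : ℕ) (u : RN N → ℝ) : ℝ :=
  (∫ x, (1 / p x) * (‖gradient u x‖ ^ p x + |u x| ^ p x))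
    - lam * (∫ x, (g ((k : ℝ)⁻¹ • x) / q x) * |u x| ^ q x)
    - ∫ x, (f ((k : ℝ)⁻¹ • x) / r x) * |u x| ^ r x

/-- The Gâteaux derivative `J'_{λ,k}(u)v`. -/
def dJlk {N : ℕ} (p q r f g : RN N → ℝ) (lam : ℝ) (k : ℕ) (u v : RN N → ℝ) : ℝ :=
  (∫ x, (‖gradient u x‖ ^ (p x - 2) * (inner ℝ (gradient u x) (gradient v x) : ℝ)
      + |u x| ^ (p x - 2) * u x * v x))
    - lam * (∫ x, g ((k : ℝ)⁻¹ • x) * |u x| ^ (q x - 2) * u x * v x)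
    - ∫ x, f ((k : ℝ)⁻¹ • x) * |u x| ^ (r x - 2) * u x * v x

/-- The derivative `E'_{λ,k}(u)v` of the map `E_{λ,k}(u) = J'_{λ,k}(u)u`. -/
def dElk {N : ℕ} (p q r f g : RN N → ℝ) (lam : ℝ) (k : ℕ) (u v : RN N → ℝ) : ℝ :=
  (∫ x, p x * (‖gradient u x‖ ^ (p x - 2) * (inner ℝ (gradient u x) (gradient v x) : ℝ)
      + |u x| ^ (p x - 2) * u x * v x))
    - lam * (∫ x, q x * (g ((k : ℝ)⁻¹ • x) * |u x| ^ (q x - 2) * u x * v x))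
    - ∫ x, r x * (f ((k : ℝ)⁻¹ • x) * |u x| ^ (r x - 2) * u x * v x)

/-- The Nehari manifold `M_{λ,k}`. -/
def nehari {N : ℕ} (p q r f g : RN N → ℝ) (lam : ℝ) (k : ℕ) (u : RN N → ℝ) : Prop :=
  memW p u ∧ ¬ (u =ᵐ[(volume : Measure (RN N))] 0) ∧ dJlk p q r f g lam k u u = 0

/-- The Nehari level `c_{λ,k}`. -/
def clk {N : ℕ} (p q r f g : RN N → ℝ) (lam : ℝ) (k : ℕ) : ℝ :=
  sInf ((Jlk p q r f g lam k) '' {u | nehari p q r f g lam k u})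

/-- Limit-type functional with weight `w` in front of the `r(x)`-term. -/
def Jw {N : ℕ} (p r w : RN N → ℝ) (u : RN N → ℝ) : ℝ :=
  (∫ x, (1 / p x) * (‖gradient u x‖ ^ p x + |u x| ^ p x))
    - ∫ x, (w x / r x) * |u x| ^ r x

/-- Derivative of the limit-type functional. -/
def dJw {N : ℕ} (p r w : RN N → ℝ) (u v : RN N → ℝ) : ℝ :=
  (∫ x, (‖gradient u x‖ ^ (p x - 2) * (inner ℝ (gradient u x) (gradient v x) : ℝ)
      + |u x| ^ (p x - 2) * u x * v x))
    - ∫ x, w x * |u x| ^ (r x - 2) * u x * v x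

/-- Nehari manifold of the limit-type functional. -/
def nehariW {N : ℕ} (p r w : RN N → ℝ) (u : RN N → ℝ) : Prop :=
  memW p u ∧ ¬ (u =ᵐ[(volume : Measure (RN N))] 0) ∧ dJw p r w u u = 0

/-- Nehari level of the limit-type functional. -/
def cW {N : ℕ} (p r w : RN N → ℝ) : ℝ :=
  sInf ((Jw p r w) '' {u | nehariW p r w u})

open Set

lemma rpow_sub_two_mul_mul_self {a c : ℝ} (ha : 0 ≤ a) (hc : 0 < c) :
    a ^ (c - 2) * (a * a) = a ^ c := by
  rcases ha.eq_or_lt with rfl | ha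
  · simp [Real.zero_rpow hc.ne']
  · rw [← sq, ← Real.rpow_natCast, ← Real.rpow_add ha]
    norm_num

lemma abs_rpow_sub_two_mul_mul_self (t : ℝ) {c : ℝ} (hc : 0 < c) :
    |t| ^ (c - 2) * (t * t) = |t| ^ c := by
  rw [← abs_mul_abs_self t, rpow_sub_two_mul_mul_self (abs_nonneg t) hc]

lemma norm_rpow_sub_two_mul_inner_self {E : Type*} [NormedAddCommGroup E]
    [InnerProductSpace ℝ E] (v : E) {c : ℝ} (hc : 0 < c) :
    ‖v‖ ^ (c - 2) * inner ℝ v v = ‖v‖ ^ c := by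
  rw [real_inner_self_eq_norm_mul_norm, rpow_sub_two_mul_mul_self (norm_nonneg v) hc]

section WeightedIntegral

variable {α : Type*} [MeasurableSpace α] {μ : Measure α} {e h : α → ℝ} {a b : ℝ}

lemma integral_mul_mem_Icc (hh : Integrable h μ) (h0 : ∀ᵐ x ∂μ, 0 ≤ h x)
    (he : AEStronglyMeasurable e μ) (ha : 0 ≤ a) (hab : ∀ᵐ x ∂μ, e x ∈ Icc a b) :
    ∫ x, e x * h x ∂μ ∈ Icc (a * ∫ x, h x ∂μ) (b * ∫ x, h x ∂μ) := by
  have heh : Integrable (fun x => e x * h x) μ := by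
    refine hh.bdd_mul he (c := b) ?_
    filter_upwards [hab] with x hx
    rw [Real.norm_eq_abs, abs_of_nonneg (ha.trans hx.1)]
    exact hx.2
  rw [← integral_const_mul, ← integral_const_mul]
  constructor
  · refine integral_mono_ae (hh.const_mul a) heh ?_
    filter_upwards [h0, hab] with x hx0 hx
    exact mul_le_mul_of_nonneg_right hx.1 hx0
  · refine integral_mono_ae heh (hh.const_mul b) ?_
    filter_upwards [h0, hab] with x hx0 hx
    exact mul_le_mul_of_nonneg_right hx.2 hx0

end WeightedIntegral

section Nehari

variable {N : ℕ} {p q r f g : RN N → ℝ} {lam : ℝ} {k : ℕ} {u : RN N → ℝ}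

lemma rho1_pos (hu : memW p u) (hne : ¬ u =ᵐ[volume] 0) : 0 < rho1 p u := by
  refine (integral_nonneg fun x => by positivity).lt_of_ne' fun h0 => hne ?_
  filter_upwards [(integral_eq_zero_iff_of_nonneg (fun x => by positivity) hu.2).mp h0] with x hx
  by_contra hux
  have : 0 < |u x| ^ p x := Real.rpow_pos_of_pos (abs_pos.mpr hux) _
  have : 0 ≤ ‖gradient u x‖ ^ p x := by positivity
  simp only [Pi.zero_apply] at hx
  linarith

lemma dJlk_self (hp : ∀ᵐ x, 0 < p x) (hq : ∀ᵐ x, 0 < q x) (hr : ∀ᵐ x, 0 < r x) :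
    dJlk p q r f g lam k u u = rho1 p u
      - lam * (∫ x, g ((k : ℝ)⁻¹ • x) * |u x| ^ q x)
      - ∫ x, f ((k : ℝ)⁻¹ • x) * |u x| ^ r x := by
  unfold dJlk rho1
  refine congrArg₂ (· - ·) (congrArg₂ (· - ·) ?_ (congrArg _ ?_)) ?_ <;>
    refine integral_congr_ae ?_
  · filter_upwards [hp] with x hx
    simp only [mul_assoc, abs_rpow_sub_two_mul_mul_self _ hx,
      norm_rpow_sub_two_mul_inner_self _ hx]
  · filter_upwards [hq] with x hx
    simp only [mul_assoc, abs_rpow_sub_two_mul_mul_self _ hx]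
  · filter_upwards [hr] with x hx
    simp only [mul_assoc, abs_rpow_sub_two_mul_mul_self _ hx]

lemma dElk_self (hp : ∀ᵐ x, 0 < p x) (hq : ∀ᵐ x, 0 < q x) (hr : ∀ᵐ x, 0 < r x) :
    dElk p q r f g lam k u u = (∫ x, p x * (‖gradient u x‖ ^ p x + |u x| ^ p x))
      - lam * (∫ x, q x * (g ((k : ℝ)⁻¹ • x) * |u x| ^ q x))
      - ∫ x, r x * (f ((k : ℝ)⁻¹ • x) * |u x| ^ r x) := by
  unfold dElk
  refine congrArg₂ (· - ·) (congrArg₂ (· - ·) ?_ (congrArg _ ?_)) ?_ <;>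
    refine integral_congr_ae ?_
  · filter_upwards [hp] with x hx
    simp only [mul_assoc, abs_rpow_sub_two_mul_mul_self _ hx,
      norm_rpow_sub_two_mul_inner_self _ hx]
  · filter_upwards [hq] with x hx
    simp only [mul_assoc, abs_rpow_sub_two_mul_mul_self _ hx]
  · filter_upwards [hr] with x hx
    simp only [mul_assoc, abs_rpow_sub_two_mul_mul_self _ hx]

end Nehari

theorem dElk_neg_on_nehari_general {N : ℕ} (p q r f g : RN N → ℝ) (lam : ℝ) (k : ℕ)
    (pp qm rm rp : ℝ)
    (hpm : Measurable p) (hqm : Measurable q) (hrm : Measurable r)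
    (hf0 : ∀ x, 0 ≤ f x) (hg0 : ∀ x, 0 ≤ g x) (hlam : 0 ≤ lam)
    (hp : ∀ᵐ x : RN N, 1 < p x ∧ p x ≤ pp) (hppqm : pp < qm) (hpp : 0 < pp)
    (hq : ∀ᵐ x : RN N, qm ≤ q x ∧ q x ≤ r x ∧ rm ≤ r x ∧ r x ≤ rp)
    (u : RN N → ℝ) (hu : nehari p q r f g lam k u)
    (hig : Integrable (fun x => g ((k : ℝ)⁻¹ • x) * |u x| ^ q x) (volume : Measure (RN N)))
    (hif : Integrable (fun x => f ((k : ℝ)⁻¹ • x) * |u x| ^ r x) (volume : Measure (RN N))) :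
    dElk p q r f g lam k u u ≤ -(qm - pp) * rho1 p u ∧ dElk p q r f g lam k u u < 0 := by
  obtain ⟨hW, hne, hneh⟩ := hu
  have hqm0 : 0 < qm := hpp.trans hppqm
  have hp0 : ∀ᵐ x : RN N, 0 < p x := hp.mono fun x hx => one_pos.trans hx.1
  have hq0 : ∀ᵐ x : RN N, 0 < q x := hq.mono fun x hx => hqm0.trans_le hx.1
  have hr0 : ∀ᵐ x : RN N, 0 < r x := hq.mono fun x hx => hqm0.trans_le (hx.1.trans hx.2.1)
  have hnehari := dJlk_self (f := f) (g := g) (lam := lam) (k := k) (u := u) hp0 hq0 hr0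
  rw [hneh] at hnehari
  have hP := integral_mul_mem_Icc hW.2 (.of_forall fun x => by positivity)
    hpm.aestronglyMeasurable le_rfl (hp.mono fun x hx => ⟨(one_pos.trans hx.1).le, hx.2⟩)
  have hQ := integral_mul_mem_Icc hig
    (.of_forall fun x => by have := hg0 ((k : ℝ)⁻¹ • x); positivity)
    hqm.aestronglyMeasurable hqm0.le (hq.mono fun x hx => ⟨hx.1, hx.2.1.trans hx.2.2.2⟩)
  have hR := integral_mul_mem_Icc hif
    (.of_forall fun x => by have := hf0 ((k : ℝ)⁻¹ • x); positivity)
    hrm.aestronglyMeasurable hqm0.le (hq.mono fun x hx => ⟨hx.1.trans hx.2.1, hx.2.2.2⟩)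
  have hmain : dElk p q r f g lam k u u ≤ -(qm - pp) * rho1 p u := by
    rw [dElk_self hp0 hq0 hr0]
    unfold rho1 at hnehari ⊢
    nlinarith [hP.2, hR.1, mul_le_mul_of_nonneg_left hQ.1 hlam]
  exact ⟨hmain, hmain.trans_lt (by nlinarith [rho1_pos hW hne])⟩

/-- for `u ∈ M_{λ,k}` one has `E'_{λ,k}(u)u ≤ -(q₋ - p₊) ρ₁(u) < 0`. -/
theorem dElk_neg_on_nehari {N : ℕ} (p q r f g : RN N → ℝ) (lam : ℝ) (k : ℕ)
    (pp qm rm rp : ℝ)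
    (hpm : Measurable p) (hqm : Measurable q) (hrm : Measurable r)
    (hfc : Continuous f) (hgc : Continuous g)
    (hf0 : ∀ x, 0 ≤ f x) (hg0 : ∀ x, 0 ≤ g x) (hlam : 0 ≤ lam)
    (hp : ∀ᵐ x : RN N, 1 < p x ∧ p x ≤ pp) (hppqm : pp < qm) (hpp : 0 < pp)
    (hq : ∀ᵐ x : RN N, qm ≤ q x ∧ q x ≤ r x ∧ rm ≤ r x ∧ r x ≤ rp) (hqmrm : qm ≤ rm)
    (u : RN N → ℝ) (hu : nehari p q r f g lam k u)
    (hig : Integrable (fun x => g ((k : ℝ)⁻¹ • x) * |u x| ^ q x) (volume : Measure (RN N)))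
    (hif : Integrable (fun x => f ((k : ℝ)⁻¹ • x) * |u x| ^ r x) (volume : Measure (RN N))) :
    dElk p q r f g lam k u u ≤ -(qm - pp) * rho1 p u ∧ dElk p q r f g lam k u u < 0 :=
  dElk_neg_on_nehari_general p q r f g lam k pp qm rm rp hpm hqm hrm hf0 hg0 hlam hp hppqm hpp hq u
    hu hig hif
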